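/- arXiv:1406.2084 — 3 statements merged into one kernel-verified Lean document; each statement's English description precedes it below -/
import Mathlib

section
/- Let T be a pseudo-tree and C an initial chain in T. If Λ = {t^α_β : α < λ, β < θ_α} is a λ-fan above C and Λ' = {u^ξ_ζ : ξ < λ', ζ < θ'_ξ} is a λ'-fan above C, then λ = λ' and there is a bijection φ : λ → λ' such that θ'_{φ(α)} = θ_α for every α < λ. In particular, the cardinal λ and the family of cardinals {θ_α : α < λ} of a λ-fan above C are uniquely determined by C. -/
open Cardinal

/-- `R` is a set of approximate immediate successors of the initial chain `C`:
every `r ∈ R` is above `C` (i.e. `c < r` for all `c ∈ C`), and every element above `C`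
is above some member of `R`. -/
def ApproxImmSucc {T : Type*} [Preorder T] (C R : Set T) : Prop :=
  (∀ r ∈ R, ∀ c ∈ C, c < r) ∧ ∀ s : T, (∀ c ∈ C, c < s) → ∃ r ∈ R, r ≤ s

/-- A `λ`-fan above an initial chain `C` in a pseudo-tree, presented as a doubly indexed
family `t α β` (`α < λ`, `β < θ α`): the family is a set of approximate immediate
successors of `C`; each `θ α` is `1` or an infinite regular cardinal; each column
`(t α β)_{β < θ α}` is strictly decreasing and coinitial in
`{s : C < s ≤ t α 0}` (equivalently, in the set of elements above `C` lying below some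
member of the column); and elements of distinct columns are incomparable. -/
structure IsLambdaFan {T : Type*} [PartialOrder T] (C : Set T) (lam : Cardinal)
    (θ : lam.ord.ToType → Cardinal)
    (t : (α : lam.ord.ToType) → (θ α).ord.ToType → T) : Prop where
  above : ∀ α β, ∀ c ∈ C, c < t α β
  approx : ∀ s : T, (∀ c ∈ C, c < s) → ∃ α β, t α β ≤ s
  theta : ∀ α, θ α = 1 ∨ (ℵ₀ ≤ θ α ∧ (θ α).IsRegular)
  strictAnti : ∀ α, StrictAnti (t α)
  coinitial : ∀ α, ∀ s : T, (∀ c ∈ C, c < s) → (∃ β, s ≤ t α β) → ∃ β, t α β ≤ s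
  incomp : ∀ α α', α ≠ α' → ∀ β β', ¬t α β ≤ t α' β' ∧ ¬t α' β' ≤ t α β

universe u

/-!
Call columns `α` of `t` and `ξ` of `u` linked if some `u ξ ζ` lies below some `t α β`.
Since the elements below a point form a chain and distinct columns of a fan are
incomparable, each column of one fan is linked to exactly one column of the other, and the
relation is symmetric; this gives the bijection `φ`. Linked columns are then mutually
coinitial strictly decreasing sequences, so their index orders have the same cofinality,
and a cardinal that is `1` or regular is the cofinality of its own initial ordinal.
-/

theorem Cardinal.cof_ord_eq_self_of_eq_one_or_isRegular {κ : Cardinal}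
    (h : κ = 1 ∨ κ.IsRegular) : κ.ord.cof = κ := by
  rcases h with rfl | hreg
  · rw [ord_one, Ordinal.cof_one]
  · exact hreg.cof_ord

theorem Order.cof_le_cof_of_coinitial {T : Type*} {ι ι' : Type u} [Preorder T] [LinearOrder ι]
    [LinearOrder ι'] {a : ι → T} {b : ι' → T} (ha : Antitone a) (hb : StrictAnti b)
    (hab : ∀ i, ∃ j, b j ≤ a i) (hba : ∀ j, ∃ i, a i ≤ b j) :
    Order.cof ι' ≤ Order.cof ι := by
  obtain ⟨s, hs, hcard⟩ := Order.exists_cof_eq ι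
  choose f hf using hab
  have hcofinal : IsCofinal (f '' s) := by
    intro j
    obtain ⟨i, hi⟩ := hba j
    obtain ⟨i', hi's, hii'⟩ := hs i
    exact ⟨f i', Set.mem_image_of_mem f hi's,
      hb.le_iff_ge.1 ((hf i').trans ((ha hii').trans hi))⟩
  calc Order.cof ι' ≤ #(f '' s) := Order.cof_le hcofinal
    _ ≤ #s := mk_image_le
    _ = Order.cof ι := hcard

namespace IsLambdaFan

variable {T : Type*} [PartialOrder T] {C : Set T} {lam lam' : Cardinal}
  {θ : lam.ord.ToType → Cardinal} {θ' : lam'.ord.ToType → Cardinal}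
  {t : (α : lam.ord.ToType) → (θ α).ord.ToType → T}
  {u : (ξ : lam'.ord.ToType) → (θ' ξ).ord.ToType → T}

theorem nonempty_index (hfan : IsLambdaFan C lam θ t) (α : lam.ord.ToType) :
    Nonempty (θ α).ord.ToType := by
  rw [← Cardinal.mk_ne_zero_iff, mk_toType, card_ord]
  rcases hfan.theta α with h | ⟨-, hreg⟩
  · exact h ▸ one_ne_zero
  · exact hreg.ne_zero

theorem column_eq_of_le_of_le (hpt : ∀ x : T, IsChain (· ≤ ·) {s : T | s ≤ x})
    (hfan : IsLambdaFan C lam θ t) (hfan' : IsLambdaFan C lam' θ' u)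
    {α ξ ξ' β β' ζ ζ'} (h : u ξ ζ ≤ t α β) (h' : u ξ' ζ' ≤ t α β') : ξ = ξ' := by
  by_contra hne
  have hle : u ξ ζ ≤ t α (min β β') :=
    h.trans ((hfan.strictAnti α).antitone (min_le_left _ _))
  have hle' : u ξ' ζ' ≤ t α (min β β') :=
    h'.trans ((hfan.strictAnti α).antitone (min_le_right _ _))
  have hincomp := hfan'.incomp ξ ξ' hne ζ ζ'
  rcases (hpt _).total hle hle' with h | h
  exacts [hincomp.1 h, hincomp.2 h]

theorem exists_le_of_le (hfan : IsLambdaFan C lam θ t) (hfan' : IsLambdaFan C lam' θ' u)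
    {α ξ β ζ} (h : u ξ ζ ≤ t α β) : ∃ β', t α β' ≤ u ξ ζ := by
  obtain ⟨α', β', hle⟩ := hfan.approx (u ξ ζ) (hfan'.above ξ ζ)
  obtain rfl : α' = α := by
    by_contra hne
    exact (hfan.incomp α' α hne β' β).1 (hle.trans h)
  exact ⟨β', hle⟩

theorem linked_comm (hfan : IsLambdaFan C lam θ t) (hfan' : IsLambdaFan C lam' θ' u)
    {α ξ} : (∃ ζ β, u ξ ζ ≤ t α β) ↔ ∃ β ζ, t α β ≤ u ξ ζ := by
  constructor
  · rintro ⟨ζ, β, h⟩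
    obtain ⟨β', h'⟩ := hfan.exists_le_of_le hfan' h
    exact ⟨β', ζ, h'⟩
  · rintro ⟨β, ζ, h⟩
    obtain ⟨ζ', h'⟩ := hfan'.exists_le_of_le hfan h
    exact ⟨ζ', β, h'⟩

theorem forall_exists_le_of_linked (hpt : ∀ x : T, IsChain (· ≤ ·) {s : T | s ≤ x})
    (hfan : IsLambdaFan C lam θ t) (hfan' : IsLambdaFan C lam' θ' u)
    {α ξ} (h : ∃ ζ β, u ξ ζ ≤ t α β) (β) : ∃ ζ, u ξ ζ ≤ t α β := by
  obtain ⟨ζ₀, β₀, h₀⟩ := h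
  obtain ⟨ξ', ζ, hle⟩ := hfan'.approx (t α β) (hfan.above α β)
  obtain rfl := column_eq_of_le_of_le hpt hfan hfan' hle h₀
  exact ⟨ζ, hle⟩

theorem existsUnique_linked (hpt : ∀ x : T, IsChain (· ≤ ·) {s : T | s ≤ x})
    (hfan : IsLambdaFan C lam θ t) (hfan' : IsLambdaFan C lam' θ' u) (α) :
    ∃! ξ, ∃ ζ β, u ξ ζ ≤ t α β := by
  obtain ⟨β⟩ := hfan.nonempty_index α
  obtain ⟨ξ, ζ, h⟩ := hfan'.approx (t α β) (hfan.above α β)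
  refine ⟨ξ, ⟨ζ, β, h⟩, ?_⟩
  rintro ξ' ⟨ζ', β', h'⟩
  exact column_eq_of_le_of_le hpt hfan hfan' h' h

end IsLambdaFan

theorem stmt17_general {T : Type u} [PartialOrder T]
    (hpt : ∀ x : T, IsChain (· ≤ ·) {s : T | s ≤ x})
    (C : Set T)
    (lam lam' : Cardinal.{u})
    (θ : lam.ord.ToType → Cardinal.{u}) (θ' : lam'.ord.ToType → Cardinal.{u})
    (t : (α : lam.ord.ToType) → (θ α).ord.ToType → T)
    (u : (ξ : lam'.ord.ToType) → (θ' ξ).ord.ToType → T)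
    (hfan : IsLambdaFan C lam θ t) (hfan' : IsLambdaFan C lam' θ' u) :
    lam = lam' ∧ ∃ φ : lam.ord.ToType → lam'.ord.ToType,
      Function.Bijective φ ∧ ∀ α, θ' (φ α) = θ α := by
  choose φ hφ hφ_unique using hfan.existsUnique_linked hpt hfan'
  have hbij : Function.Bijective φ := by
    refine (Function.bijective_iff_existsUnique φ).2 fun ξ => ?_
    obtain ⟨α, hα, hα_unique⟩ := hfan'.existsUnique_linked hpt hfan ξ
    refine ⟨α, (hφ_unique α ξ ((hfan.linked_comm hfan').2 hα)).symm, ?_⟩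
    rintro α' rfl
    exact hα_unique α' ((hfan.linked_comm hfan').1 (hφ α'))
  refine ⟨by simpa using mk_congr (Equiv.ofBijective φ hbij), φ, hbij, fun α => ?_⟩
  have hab := hfan.forall_exists_le_of_linked hpt hfan' (hφ α)
  have hba := hfan'.forall_exists_le_of_linked hpt hfan ((hfan.linked_comm hfan').1 (hφ α))
  rw [← Cardinal.cof_ord_eq_self_of_eq_one_or_isRegular ((hfan.theta α).imp_right And.right),
    ← Cardinal.cof_ord_eq_self_of_eq_one_or_isRegular
      ((hfan'.theta (φ α)).imp_right And.right),
    ← Ordinal.cof_toType, ← Ordinal.cof_toType]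
  exact le_antisymm
    (Order.cof_le_cof_of_coinitial (hfan.strictAnti α).antitone (hfan'.strictAnti _) hab hba)
    (Order.cof_le_cof_of_coinitial (hfan'.strictAnti _).antitone (hfan.strictAnti α) hba hab)

/-- In a pseudo-tree `T`, if `Λ` is a `λ`-fan and `Λ'` a `λ'`-fan above the
same initial chain `C`, then `λ = λ'` and there is a bijection `φ : λ → λ'` with
`θ'_{φ(α)} = θ_α` for all `α`; so the cardinal data of a fan above `C` is uniquely
determined by `C`. -/
theorem stmt17 {T : Type u} [PartialOrder T]
    (hpt : ∀ x : T, IsChain (· ≤ ·) {s : T | s ≤ x})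
    (C : Set T) (hCne : C.Nonempty) (hCchain : IsChain (· ≤ ·) C) (hClower : IsLowerSet C)
    (lam lam' : Cardinal.{u})
    (θ : lam.ord.ToType → Cardinal.{u}) (θ' : lam'.ord.ToType → Cardinal.{u})
    (t : (α : lam.ord.ToType) → (θ α).ord.ToType → T)
    (u : (ξ : lam'.ord.ToType) → (θ' ξ).ord.ToType → T)
    (hfan : IsLambdaFan C lam θ t) (hfan' : IsLambdaFan C lam' θ' u) :
    lam = lam' ∧ ∃ φ : lam.ord.ToType → lam'.ord.ToType,
      Function.Bijective φ ∧ ∀ α, θ' (φ α) = θ α :=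
  stmt17_general hpt C lam lam' θ θ' t u hfan hfan'
end

section
/- Let T be a pseudo-tree with a least element, let U be an ultrafilter on Treealg T, let C = {t ∈ T : T↑t ∈ U} be its corresponding initial chain, and let Λ = {t^α_β : α < λ, β < θ_α} be a λ-fan above C. Then (U,⊇) ≡_T (cf C × ∏^w_{α<λ}(1+θ_α), ≤), where the weak product is ordered pointwise and the product is ordered coordinatewise. In particular, every ultrafilter on a pseudo-tree algebra is Tukey equivalent to a product (μ × ∏^w_{α<λ} κ_α, ≤) in which μ is 1 or an infinite regular cardinal and each κ_α is 2 or an infinite regular cardinal. -/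
/-!
Fix a strictly increasing enumeration `c : cf C → C` cofinal in `C`. To `(d, w)` assign the set
`T↑c_d` minus the cones `T↑t^α_β` with `1 + β ≤ w(α)`. These sets lie in `U`, and the assignment
is an order embedding into `(U, ⊇)`: branches of the fan are pairwise incomparable and strictly
decreasing, so the removed cones determine `w`. Its image is cofinal in `U`: the family is directed,
so by induction over the generated algebra it is enough that it refines every cone in `U` and every
complement of a cone `T↑b ∉ U`; such a `b` either lies above all of `C`, hence above some `t^α_β`,
or its cone is disjoint from `T↑x` for some `x ∈ C`. An order embedding with cofinal image is a
Tukey equivalence. Finally the cofinality of a chain is `1` or regular, because the records of an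
enumeration of a minimal cofinal subset form a strictly increasing cofinal sequence indexed by it.
-/

open Cardinal

/-- A subset `X` of a preorder is cofinal if every element has an upper bound in `X`. -/
def TCofinal {P : Type*} [Preorder P] (X : Set P) : Prop :=
  ∀ p : P, ∃ x ∈ X, p ≤ x

/-- A map is cofinal if it sends cofinal sets to cofinal sets. -/
def TCofinalMap {P Q : Type*} [Preorder P] [Preorder Q] (f : P → Q) : Prop :=
  ∀ X : Set P, TCofinal X → TCofinal (f '' X)

/-- `P ≤_T Q`: there is a cofinal map from `Q` to `P`. -/
def TukeyLE (P Q : Type*) [Preorder P] [Preorder Q] : Prop :=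
  ∃ f : Q → P, TCofinalMap f

/-- Tukey equivalence. -/
def TukeyEquiv (P Q : Type*) [Preorder P] [Preorder Q] : Prop :=
  TukeyLE P Q ∧ TukeyLE Q P

/-- An ultrafilter on a Boolean algebra `B` of subsets of `X` (a field of sets):
a subset of `B` omitting `∅`, closed under intersection, upward closed in `B`, and
containing `s` or `sᶜ` for each `s ∈ B`; regarded as the partial order `(U,⊇)`. -/
structure SetUltrafilter {X : Type*} (B : Set (Set X)) where
  carrier : Set (Set X)
  subset_alg : carrier ⊆ B
  empty_not_mem : ∅ ∉ carrier
  inter_mem : ∀ a ∈ carrier, ∀ b ∈ carrier, a ∩ b ∈ carrier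
  up_closed : ∀ a ∈ carrier, ∀ b ∈ B, a ⊆ b → b ∈ carrier
  mem_or_compl_mem : ∀ b ∈ B, b ∈ carrier ∨ bᶜ ∈ carrier

/-- The Boolean subalgebra of the powerset algebra of `X` generated by a family `G`. -/
def genBoolAlg {X : Type*} (G : Set (Set X)) : Set (Set X) :=
  ⋂₀ {B : Set (Set X) | G ⊆ B ∧ ∅ ∈ B ∧ (∀ s ∈ B, sᶜ ∈ B) ∧ (∀ s ∈ B, ∀ t ∈ B, s ∩ t ∈ B)}

/-- The (pseudo-)tree algebra of a partial order `T`: the subalgebra of the powerset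
algebra of `T` generated by the cones `T↑t = {s : s ≥ t}`. -/
def treealg (T : Type*) [PartialOrder T] : Set (Set T) :=
  genBoolAlg {s : Set T | ∃ t : T, s = Set.Ici t}

/-- The cofinality of a subset `C` of a preorder: the least cardinality of a cofinal
subset of `C`. -/
noncomputable def setCof {L : Type*} [Preorder L] (C : Set L) : Cardinal :=
  sInf {c : Cardinal | ∃ D : Set L, D ⊆ C ∧ c = #↥D ∧ ∀ x ∈ C, ∃ y ∈ D, x ≤ y}

/-- The weak product `∏^w_{i ∈ I} κ i`: finitely supported choices of an ordinal
`f i < κ i` in each coordinate, ordered pointwise. -/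
def WeakProd {I : Type*} (κ : I → Cardinal) : Type _ :=
  {f : I → Ordinal // (∀ i, f i < (κ i).ord) ∧ {i | f i ≠ 0}.Finite}

noncomputable instance {I : Type*} (κ : I → Cardinal) : PartialOrder (WeakProd κ) :=
  Subtype.partialOrder _

universe u

theorem TukeyLE.of_monotone {P K : Type*} [Preorder P] [Preorder K] {f : K → P}
    (hf : Monotone f) (hcof : ∀ p, ∃ k, p ≤ f k) : TukeyLE P K := by
  refine ⟨f, fun X hX p => ?_⟩
  obtain ⟨k, hk⟩ := hcof p
  obtain ⟨x, hx, hkx⟩ := hX k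
  exact ⟨f x, Set.mem_image_of_mem f hx, hk.trans (hf hkx)⟩

theorem TukeyLE.of_le_iff {P K : Type*} [Preorder P] [Preorder K] {f : K → P}
    (hf : ∀ a b, f a ≤ f b ↔ a ≤ b) (hcof : ∀ p, ∃ k, p ≤ f k) : TukeyLE K P := by
  choose h hh using hcof
  refine ⟨h, fun X hX k => ?_⟩
  obtain ⟨x, hx, hkx⟩ := hX (f k)
  exact ⟨h x, Set.mem_image_of_mem h hx, (hf _ _).1 (hkx.trans (hh x))⟩

theorem TukeyEquiv.of_le_iff {P K : Type*} [Preorder P] [Preorder K] {f : K → P}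
    (hf : ∀ a b, f a ≤ f b ↔ a ≤ b) (hcof : ∀ p, ∃ k, p ≤ f k) : TukeyEquiv P K :=
  ⟨.of_monotone (fun a b h => (hf a b).2 h) hcof, .of_le_iff hf hcof⟩

namespace genBoolAlg

variable {X : Type*} {G : Set (Set X)}

theorem subset_genBoolAlg : G ⊆ genBoolAlg G := fun _ hs _ hB => hB.1 hs

theorem empty_mem : ∅ ∈ genBoolAlg G := fun _ hB => hB.2.1

theorem compl_mem {s : Set X} (hs : s ∈ genBoolAlg G) : sᶜ ∈ genBoolAlg G :=
  fun B hB => hB.2.2.1 s (hs B hB)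

theorem inter_mem {s t : Set X} (hs : s ∈ genBoolAlg G) (ht : t ∈ genBoolAlg G) :
    s ∩ t ∈ genBoolAlg G :=
  fun B hB => hB.2.2.2 s (hs B hB) t (ht B hB)

theorem univ_mem : Set.univ ∈ genBoolAlg G := by
  simpa using compl_mem (empty_mem (G := G))

theorem induction {P : Set X → Prop} (hG : ∀ s ∈ G, P s) (hempty : P ∅)
    (hcompl : ∀ s ∈ genBoolAlg G, P s → P sᶜ)
    (hinter : ∀ s ∈ genBoolAlg G, ∀ t ∈ genBoolAlg G, P s → P t → P (s ∩ t)) :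
    ∀ s ∈ genBoolAlg G, P s := fun _ hs =>
  (hs {s | s ∈ genBoolAlg G ∧ P s}
    ⟨fun s h => ⟨subset_genBoolAlg h, hG s h⟩, ⟨empty_mem, hempty⟩,
      fun s h => ⟨compl_mem h.1, hcompl s h.1 h.2⟩,
      fun s h t h' => ⟨inter_mem h.1 h'.1, hinter s h.1 t h'.1 h.2 h'.2⟩⟩).2

end genBoolAlg

namespace SetUltrafilter

section

variable {X : Type*} {B : Set (Set X)} (U : SetUltrafilter B)

theorem compl_mem_iff {s : Set X} (hs : s ∈ B) : sᶜ ∈ U.carrier ↔ s ∉ U.carrier := by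
  refine ⟨fun hc h => U.empty_not_mem ?_, (U.mem_or_compl_mem s hs).resolve_left⟩
  simpa using U.inter_mem _ h _ hc

theorem diff_biUnion_mem {ι : Type*} {a : Set X} (ha : a ∈ U.carrier) (s : Finset ι)
    {A : ι → Set X} (hA : ∀ i ∈ s, A i ∈ B ∧ A i ∉ U.carrier) :
    a \ ⋃ i ∈ s, A i ∈ U.carrier := by
  classical
  induction s using Finset.induction_on with
  | empty => simpa using ha
  | insert i s _ ih =>
    rw [Finset.set_biUnion_insert, Set.union_comm, ← Set.sdiff_sdiff]
    exact U.inter_mem _ (ih fun j hj => hA j (Finset.mem_insert_of_mem hj)) _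
      ((U.compl_mem_iff (hA i (Finset.mem_insert_self i s)).1).2
        (hA i (Finset.mem_insert_self i s)).2)

theorem tukeyEquiv_of_basis {K : Type*} [Preorder K] {g : K → Set X} (hgU : ∀ k, g k ∈ U.carrier)
    (hg : ∀ k k', g k' ⊆ g k ↔ k ≤ k') (hcof : ∀ u ∈ U.carrier, ∃ k, g k ⊆ u) :
    TukeyEquiv (↥U.carrier)ᵒᵈ K :=
  .of_le_iff (f := fun k => OrderDual.toDual ⟨g k, hgU k⟩) hg fun p => hcof _ p.ofDual.2

end

section

variable {X : Type*} {G : Set (Set X)} (U : SetUltrafilter (genBoolAlg G))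

theorem univ_mem : Set.univ ∈ U.carrier :=
  (U.mem_or_compl_mem _ genBoolAlg.univ_mem).resolve_right (by simpa using U.empty_not_mem)

theorem exists_subset_of_refines_generators {K : Type*} [Preorder K] [IsDirectedOrder K]
    [Nonempty K] {g : K → Set X} (hg : Antitone g) (hG : ∀ s ∈ G, s ∈ U.carrier → ∃ k, g k ⊆ s)
    (hGc : ∀ s ∈ G, sᶜ ∈ U.carrier → ∃ k, g k ⊆ sᶜ) {u : Set X} (hu : u ∈ U.carrier) :
    ∃ k, g k ⊆ u := by
  let Refined : Set X → Prop := fun v => v ∈ U.carrier → ∃ k, g k ⊆ v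
  -- `v` and `vᶜ` together, so that the induction passes through complements
  suffices h : ∀ v ∈ genBoolAlg G, Refined v ∧ Refined vᶜ from (h u (U.subset_alg hu)).1 hu
  refine genBoolAlg.induction (fun s hs => ⟨hG s hs, hGc s hs⟩) ⟨fun h => ?_, fun _ => ?_⟩
    (fun _ _ h => ⟨h.2, by simpa using h.1⟩) (fun s hs t ht h h' => ⟨fun hst => ?_, fun hst => ?_⟩)
  · exact absurd h U.empty_not_mem
  · exact ⟨Classical.arbitrary K, by simp⟩
  · obtain ⟨k, hk⟩ := h.1 (U.up_closed _ hst _ hs Set.inter_subset_left)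
    obtain ⟨k', hk'⟩ := h'.1 (U.up_closed _ hst _ ht Set.inter_subset_right)
    obtain ⟨k'', hkk'', hk'k''⟩ := exists_ge_ge k k'
    exact ⟨k'', Set.subset_inter ((hg hkk'').trans hk) ((hg hk'k'').trans hk')⟩
  · have hst' : s ∉ U.carrier ∨ t ∉ U.carrier := by
      by_contra! hc
      exact (U.compl_mem_iff (genBoolAlg.inter_mem hs ht)).1 hst (U.inter_mem _ hc.1 _ hc.2)
    rcases hst' with hs' | ht'
    · obtain ⟨k, hk⟩ := h.2 ((U.compl_mem_iff hs).2 hs')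
      exact ⟨k, hk.trans (Set.compl_subset_compl.2 Set.inter_subset_left)⟩
    · obtain ⟨k, hk⟩ := h'.2 ((U.compl_mem_iff ht).2 ht')
      exact ⟨k, hk.trans (Set.compl_subset_compl.2 Set.inter_subset_right)⟩

end

end SetUltrafilter

open Cardinal Order Ordinal in
theorem Order.exists_strictMono_isCofinal_range (α : Type u) [LinearOrder α] :
    ∃ f : (cof α).ord.ToType → α, StrictMono f ∧ IsCofinal (Set.range f) := by
  obtain ⟨s, hs, hcard⟩ := exists_cof_eq α
  obtain ⟨e⟩ : Nonempty ((cof α).ord.ToType ≃ s) := by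
    rw [← Cardinal.eq, mk_toType, card_ord, hcard]
  -- the records of `e`: indices whose value exceeds all earlier values
  let R : Set (cof α).ord.ToType := {i | ∀ j < i, (e j : α) < e i}
  have hR : StrictMono fun i : R => (e i : α) := fun i j hij => j.2 i hij
  have hRcof : IsCofinal (Set.range fun i : R => (e i : α)) := by
    intro x
    obtain ⟨y, hy, hxy⟩ := hs x
    obtain ⟨j, hj, hjmin⟩ := wellFounded_lt.has_min {j | y ≤ e j} ⟨e.symm ⟨y, hy⟩, by simp⟩
    exact ⟨_, ⟨⟨j, fun k hk => (not_le.1 fun h => hjmin k h hk).trans_le hj⟩, rfl⟩, hxy.trans hj⟩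
  have htype : typeLT R = (cof α).ord := by
    refine le_antisymm ?_ ?_
    · simpa using (OrderEmbedding.subtype (· ∈ R)).ltEmbedding.ordinal_type_le
    · rw [ord_le, Ordinal.card_type]
      exact (cof_congr_of_strictMono hR hRcof).ge.trans (cof_le_cardinalMk R)
  obtain ⟨iso⟩ := Ordinal.type_eq.1 (htype.trans (Ordinal.type_toType _).symm)
  let enum : (cof α).ord.ToType ≃o R := (OrderIso.ofRelIsoLT iso).symm
  refine ⟨(fun i : R => (e i : α)) ∘ enum, hR.comp enum.strictMono, ?_⟩
  rwa [enum.surjective.range_comp]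

open Cardinal Order in
theorem Order.cof_eq_one_or_isRegular (α : Type u) [LinearOrder α] [Nonempty α] :
    cof α = 1 ∨ ℵ₀ ≤ cof α ∧ (cof α).IsRegular := by
  obtain ⟨f, hf, hcof⟩ := exists_strictMono_isCofinal_range α
  rcases lt_or_ge (cof α) ℵ₀ with h | h
  · exact .inl (le_antisymm (cof_lt_aleph0_iff.1 h) (Cardinal.one_le_iff_ne_zero.2 cof_ne_zero))
  · refine .inr ⟨h, h, ?_⟩
    rw [← Ordinal.cof_toType, cof_congr_of_strictMono hf hcof]

theorem setCof_eq_cof {L : Type*} [Preorder L] (C : Set L) : setCof C = Order.cof C := by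
  apply le_antisymm
  · obtain ⟨s, hs, hcard⟩ := Order.exists_cof_eq C
    refine csInf_le' ⟨Subtype.val '' s, by simp, ?_, fun x hx => ?_⟩
    · rw [← hcard, Cardinal.mk_image_eq Subtype.val_injective]
    · obtain ⟨y, hy, hxy⟩ := hs ⟨x, hx⟩
      exact ⟨y, Set.mem_image_of_mem _ hy, hxy⟩
  · refine le_csInf ⟨_, C, subset_rfl, rfl, fun x hx => ⟨x, hx, le_rfl⟩⟩ ?_
    rintro _ ⟨D, hD, rfl, hDcof⟩
    refine (Order.cof_le (s := Subtype.val ⁻¹' D) fun x => ?_).trans ?_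
    · obtain ⟨y, hy, hxy⟩ := hDcof x x.2
      exact ⟨⟨y, hD hy⟩, hy, hxy⟩
    · exact Cardinal.mk_preimage_of_injective _ _ Subtype.val_injective

theorem Ordinal.ToType.coe_le_coe {o : Ordinal} {β β' : o.ToType} :
    (β : Ordinal) ≤ β' ↔ β ≤ β' :=
  ToType.mk.symm.le_iff_le

theorem Cardinal.ord_one_add (θ : Cardinal) : (1 + θ).ord = 1 + θ.ord := by
  rcases lt_or_ge θ ℵ₀ with h | h
  · obtain ⟨n, rfl⟩ := lt_aleph0.1 h
    rw [← Nat.cast_one, ← Nat.cast_add, ord_natCast, ord_natCast]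
    norm_cast
  · rw [add_eq_right h (one_le_aleph0.trans h), Ordinal.one_add_of_omega0_le]
    rwa [← ord_aleph0, ord_le_ord]

theorem Ordinal.one_add_lt_ord_one_add {θ : Cardinal} (β : θ.ord.ToType) :
    1 + (β : Ordinal) < (1 + θ).ord := by
  rw [Cardinal.ord_one_add]
  exact add_lt_add_right (ToType.toOrd β).2 1

theorem Ordinal.exists_one_add_eq_of_lt_ord_one_add {θ : Cardinal} {x : Ordinal}
    (hx : x < (1 + θ).ord) (h0 : x ≠ 0) : ∃ β : θ.ord.ToType, 1 + (β : Ordinal) = x := by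
  have hx1 := Ordinal.add_sub_cancel_of_le (Order.one_le_iff_ne_zero.2 h0)
  rw [Cardinal.ord_one_add, ← hx1, add_lt_add_iff_left] at hx
  exact ⟨ToType.mk ⟨x - 1, hx⟩, by simpa using hx1⟩

theorem Cardinal.one_add_eq_two_or_isRegular {θ : Cardinal} (h : θ = 1 ∨ ℵ₀ ≤ θ ∧ θ.IsRegular) :
    1 + θ = 2 ∨ ℵ₀ ≤ 1 + θ ∧ (1 + θ).IsRegular := by
  rcases h with rfl | ⟨h, hreg⟩
  · exact .inl one_add_one_eq_two
  · rw [add_eq_right h (one_le_aleph0.trans h)]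
    exact .inr ⟨h, hreg⟩

instance Prod.isDirectedOrder {α β : Type*} [Preorder α] [Preorder β] [IsDirectedOrder α]
    [IsDirectedOrder β] : IsDirectedOrder (α × β) where
  directed a b :=
    let ⟨c, hac, hbc⟩ := exists_ge_ge a.1 b.1
    let ⟨d, had, hbd⟩ := exists_ge_ge a.2 b.2
    ⟨(c, d), ⟨hac, had⟩, ⟨hbc, hbd⟩⟩

namespace WeakProd

variable {I : Type*} {κ : I → Cardinal}

instance : IsDirectedOrder (WeakProd κ) where
  directed f g := by
    refine ⟨⟨fun i => max (f.1 i) (g.1 i), fun i => max_lt (f.2.1 i) (g.2.1 i),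
      (f.2.2.union g.2.2).subset fun i hi => ?_⟩, fun i => le_max_left _ _,
      fun i => le_max_right _ _⟩
    by_contra! h
    simp_all

theorem exists_le_apply (hκ : ∀ i, κ i ≠ 0) (i : I) {x : Ordinal} (hx : x < (κ i).ord) :
    ∃ w : WeakProd κ, x ≤ w.1 i := by
  classical
  refine ⟨⟨Function.update 0 i x, fun j => ?_,
    (Set.finite_singleton i).subset fun j hj => ?_⟩, by simp⟩
  · rcases eq_or_ne j i with rfl | hj
    · simpa
    · simpa [hj, Cardinal.ord_pos, pos_iff_ne_zero] using hκ j
  · by_contra hji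
    simp_all

theorem nonempty (hκ : ∀ i, κ i ≠ 0) : Nonempty (WeakProd κ) :=
  ⟨⟨0, fun i => by simpa [Cardinal.ord_pos, pos_iff_ne_zero] using hκ i, by simp⟩⟩

end WeakProd

theorem Ici_mem_treealg {T : Type*} [PartialOrder T] (a : T) : Set.Ici a ∈ treealg T :=
  genBoolAlg.subset_genBoolAlg ⟨a, rfl⟩

def SetUltrafilter.chain {T : Type*} [PartialOrder T] (U : SetUltrafilter (treealg T)) : Set T :=
  {x | Set.Ici x ∈ U.carrier}

namespace SetUltrafilter

variable {T : Type*} [PartialOrder T] (U : SetUltrafilter (treealg T))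

theorem isChain_chain (hpt : ∀ x : T, IsChain (· ≤ ·) {s : T | s ≤ x}) :
    IsChain (· ≤ ·) U.chain := by
  intro x hx y hy hxy
  obtain ⟨z, hxz, hyz⟩ : (Set.Ici x ∩ Set.Ici y).Nonempty :=
    Set.nonempty_iff_ne_empty.2 fun h => U.empty_not_mem (h ▸ U.inter_mem _ hx _ hy)
  exact hpt z hxz hyz hxy

theorem bot_mem_chain [OrderBot T] : ⊥ ∈ U.chain := by
  simpa [chain] using U.univ_mem

theorem disjoint_Ici_of_not_lt (hpt : ∀ x : T, IsChain (· ≤ ·) {s : T | s ≤ x}) {x b : T}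
    (hx : x ∈ U.chain) (hb : b ∉ U.chain) (hxb : ¬x < b) : Disjoint (Set.Ici x) (Set.Ici b) := by
  refine Set.disjoint_left.2 fun y hxy hby => ?_
  rcases (hpt y).total hxy hby with h | h
  · exact hxb (h.lt_of_ne fun e => hb (e ▸ hx))
  · exact hb (U.up_closed _ hx _ (Ici_mem_treealg b) (Set.Ici_subset_Ici.2 h))

end SetUltrafilter

section Fan

variable {T : Type*} [PartialOrder T] {ι : Type*} {θ : ι → Cardinal}

/-- A coordinate `x < 1 + θ α` of the weak product codes no cone (`x = 0`) or the cone above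
`t α β` (`x = 1 + β`). -/
def fanConesAt (t : (α : ι) → (θ α).ord.ToType → T) (α : ι) (x : Ordinal) : Set T :=
  ⋃ (β : (θ α).ord.ToType) (_ : 1 + (β : Ordinal) ≤ x), Set.Ici (t α β)

def fanCones (t : (α : ι) → (θ α).ord.ToType → T) (w : ι → Ordinal) : Set T :=
  ⋃ α, fanConesAt t α (w α)

variable {t : (α : ι) → (θ α).ord.ToType → T}

theorem fanConesAt_zero (α : ι) : fanConesAt t α 0 = ∅ := by
  simp [fanConesAt]

theorem fanConesAt_one_add {α : ι} (hα : Antitone (t α)) (β : (θ α).ord.ToType) :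
    fanConesAt t α (1 + β) = Set.Ici (t α β) := by
  refine subset_antisymm (Set.iUnion₂_subset fun β' hβ' => Set.Ici_subset_Ici.2 (hα ?_))
    (Set.subset_iUnion₂
      (s := fun (β' : (θ α).ord.ToType) (_ : 1 + (β' : Ordinal) ≤ 1 + β) => Set.Ici (t α β'))
      β le_rfl)
  exact Ordinal.ToType.coe_le_coe.1 ((add_le_add_iff_left 1).1 hβ')

theorem mem_fanCones {w : ι → Ordinal} {x : T} :
    x ∈ fanCones t w ↔ ∃ α, ∃ β : (θ α).ord.ToType, 1 + (β : Ordinal) ≤ w α ∧ t α β ≤ x := by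
  simp [fanCones, fanConesAt]

theorem fanCones_mono : Monotone (fanCones t) := fun _ _ h _ hx =>
  let ⟨α, β, hβ, hx⟩ := mem_fanCones.1 hx
  mem_fanCones.2 ⟨α, β, hβ.trans (h α), hx⟩

theorem fanCones_eq_biUnion {w : ι → Ordinal} (hw : {α | w α ≠ 0}.Finite) :
    fanCones t w = ⋃ α ∈ hw.toFinset, fanConesAt t α (w α) := by
  ext x
  simp only [fanCones, Set.mem_iUnion, Set.Finite.mem_toFinset, Set.mem_ofPred_eq, exists_prop]
  refine ⟨fun ⟨α, hx⟩ => ⟨α, fun h0 => ?_, hx⟩, fun ⟨α, _, hx⟩ => ⟨α, hx⟩⟩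
  rw [h0, fanConesAt_zero] at hx
  exact hx

end Fan

def fanBasicSet {T ι D : Type*} [PartialOrder T] {θ : ι → Cardinal} (c : D → T)
    (t : (α : ι) → (θ α).ord.ToType → T) (k : D × WeakProd fun α => 1 + θ α) : Set T :=
  Set.Ici (c k.1) \ fanCones t k.2.1

theorem fanBasicSet_antitone {T ι D : Type*} [PartialOrder T] [Preorder D] {θ : ι → Cardinal}
    {c : D → T} (hc : Monotone c) (t : (α : ι) → (θ α).ord.ToType → T) :
    Antitone (fanBasicSet c t) := fun _ _ h =>
  Set.sdiff_subset_sdiff (Set.Ici_subset_Ici.2 (hc h.1)) (fanCones_mono h.2)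

namespace IsLambdaFan

variable {T : Type*} [PartialOrder T] {C : Set T} {lam : Cardinal}
  {θ : lam.ord.ToType → Cardinal} {t : (α : lam.ord.ToType) → (θ α).ord.ToType → T}

theorem fanCones_subset_Ioi (hfan : IsLambdaFan C lam θ t) {c : T} (hc : c ∈ C)
    (w : lam.ord.ToType → Ordinal) : fanCones t w ⊆ Set.Ioi c := fun _ hx =>
  let ⟨α, β, _, hx⟩ := mem_fanCones.1 hx
  (hfan.above α β c hc).trans_le hx

theorem one_add_le_of_mem_fanCones (hfan : IsLambdaFan C lam θ t) {w : lam.ord.ToType → Ordinal}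
    {α : lam.ord.ToType} {β : (θ α).ord.ToType} (h : t α β ∈ fanCones t w) :
    1 + (β : Ordinal) ≤ w α := by
  obtain ⟨α', β', hβ', hle⟩ := mem_fanCones.1 h
  obtain rfl : α' = α := by_contra fun hne => (hfan.incomp α' α hne β' β).1 hle
  have hββ' : (β : Ordinal) ≤ β' :=
    Ordinal.ToType.coe_le_coe.2 ((hfan.strictAnti α').le_iff_ge.1 hle)
  exact (add_le_add_right hββ' 1).trans hβ'

theorem fanCones_subset_fanCones_iff (hfan : IsLambdaFan C lam θ t)
    {w w' : WeakProd fun α => 1 + θ α} : fanCones t w.1 ⊆ fanCones t w'.1 ↔ w ≤ w' := by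
  refine ⟨fun h => show ∀ α, w.1 α ≤ w'.1 α from fun α => ?_, fun h => fanCones_mono h⟩
  rcases eq_or_ne (w.1 α) 0 with h0 | h0
  · rw [h0]
    exact zero_le
  obtain ⟨β, hβ⟩ := Ordinal.exists_one_add_eq_of_lt_ord_one_add (w.2.1 α) h0
  rw [← hβ]
  exact hfan.one_add_le_of_mem_fanCones (h (mem_fanCones.2 ⟨α, β, hβ.le, le_rfl⟩))

theorem fanBasicSet_subset_iff (hfan : IsLambdaFan C lam θ t) {D : Type*} [LinearOrder D]
    {c : D → T} (hc : StrictMono c) (hcC : ∀ d, c d ∈ C) {k k' : D × WeakProd fun α => 1 + θ α} :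
    fanBasicSet c t k' ⊆ fanBasicSet c t k ↔ k ≤ k' := by
  refine ⟨fun h => ⟨?_, hfan.fanCones_subset_fanCones_iff.1 fun x hx => ?_⟩,
    fun h => fanBasicSet_antitone hc.monotone t h⟩
  · have hck' : c k'.1 ∈ fanBasicSet c t k' :=
      ⟨le_rfl, fun hx => lt_irrefl _ (hfan.fanCones_subset_Ioi (hcC k'.1) _ hx)⟩
    exact hc.le_iff_le.1 (h hck').1
  · by_contra hx'
    exact (h ⟨(hfan.fanCones_subset_Ioi (hcC k'.1) _ hx).le, hx'⟩).2 hx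

variable (U : SetUltrafilter (treealg T))

theorem diff_fanCones_mem (hfan : IsLambdaFan U.chain lam θ t) {a : T} (ha : a ∈ U.chain)
    (w : WeakProd fun α => 1 + θ α) : Set.Ici a \ fanCones t w.1 ∈ U.carrier := by
  rw [fanCones_eq_biUnion w.2.2]
  refine U.diff_biUnion_mem ha _ fun α _ => ?_
  rcases eq_or_ne (w.1 α) 0 with h0 | h0
  · rw [h0, fanConesAt_zero]
    exact ⟨genBoolAlg.empty_mem, U.empty_not_mem⟩
  · obtain ⟨β, hβ⟩ := Ordinal.exists_one_add_eq_of_lt_ord_one_add (w.2.1 α) h0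
    rw [← hβ, fanConesAt_one_add (hfan.strictAnti α).antitone]
    exact ⟨Ici_mem_treealg _, fun h => lt_irrefl _ (hfan.above α β _ h)⟩

theorem exists_fanBasicSet_subset [OrderBot T] (hpt : ∀ x : T, IsChain (· ≤ ·) {s : T | s ≤ x})
    (hfan : IsLambdaFan U.chain lam θ t) {D : Type*} [Preorder D] [IsDirectedOrder D] {c : D → T}
    (hc : Monotone c) (hcof : ∀ x ∈ U.chain, ∃ d, x ≤ c d) {u : Set T} (hu : u ∈ U.carrier) :
    ∃ k, fanBasicSet c t k ⊆ u := by
  have hθ : ∀ α, 1 + θ α ≠ 0 := fun α => by simp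
  obtain ⟨w₀⟩ := WeakProd.nonempty hθ
  obtain ⟨d₀, -⟩ := hcof ⊥ U.bot_mem_chain
  have : Nonempty (D × WeakProd fun α => 1 + θ α) := ⟨(d₀, w₀)⟩
  refine U.exists_subset_of_refines_generators (fanBasicSet_antitone hc t) ?_ ?_ hu
  · rintro _ ⟨x, rfl⟩ hx
    obtain ⟨d, hd⟩ := hcof x hx
    exact ⟨(d, w₀), Set.sdiff_subset.trans (Set.Ici_subset_Ici.2 hd)⟩
  · rintro _ ⟨b, rfl⟩ hb
    replace hb : b ∉ U.chain := (U.compl_mem_iff (Ici_mem_treealg b)).1 hb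
    by_cases hCb : ∀ x ∈ U.chain, x < b
    · obtain ⟨α, β, hβ⟩ := hfan.approx b hCb
      obtain ⟨w, hw⟩ := WeakProd.exists_le_apply hθ α (Ordinal.one_add_lt_ord_one_add β)
      exact ⟨(d₀, w), fun x hx hxb => hx.2 (mem_fanCones.2 ⟨α, β, hw, hβ.trans hxb⟩)⟩
    · push Not at hCb
      obtain ⟨x, hx, hxb⟩ := hCb
      obtain ⟨d, hd⟩ := hcof x hx
      exact ⟨(d, w₀), Set.sdiff_subset.trans ((Set.Ici_subset_Ici.2 hd).trans
        (U.disjoint_Ici_of_not_lt hpt hx hb hxb).subset_compl_right)⟩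

theorem tukeyEquiv [OrderBot T] (hpt : ∀ x : T, IsChain (· ≤ ·) {s : T | s ≤ x})
    (hfan : IsLambdaFan U.chain lam θ t) {D : Type*} [LinearOrder D] {c : D → T}
    (hc : StrictMono c) (hcC : ∀ d, c d ∈ U.chain) (hcof : ∀ x ∈ U.chain, ∃ d, x ≤ c d) :
    TukeyEquiv (↥U.carrier)ᵒᵈ (D × WeakProd fun α => 1 + θ α) :=
  U.tukeyEquiv_of_basis (fun k => hfan.diff_fanCones_mem U (hcC k.1) k.2)
    (fun _ _ => hfan.fanBasicSet_subset_iff hc hcC)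
    (fun _ hu => hfan.exists_fanBasicSet_subset U hpt hc.monotone hcof hu)

end IsLambdaFan

/-- Let `T` be a pseudo-tree with a least element, `U` an ultrafilter on
`Treealg T` with corresponding initial chain `C = {x : T↑x ∈ U}`, and `Λ = (t α β)` a
`λ`-fan above `C`.  Then `(U,⊇) ≡_T (cf C × ∏^w_{α<λ}(1+θ_α), ≤)`.  In particular,
`(U,⊇)` is Tukey equivalent to a product `(μ × ∏^w κ_α, ≤)` with `μ` equal to `1` or an
infinite regular cardinal and each `κ_α` equal to `2` or an infinite regular cardinal. -/
theorem stmt18 {T : Type u} [PartialOrder T] [OrderBot T]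
    (hpt : ∀ x : T, IsChain (· ≤ ·) {s : T | s ≤ x})
    (U : SetUltrafilter (treealg T))
    (lam : Cardinal.{u}) (θ : lam.ord.ToType → Cardinal.{u})
    (t : (α : lam.ord.ToType) → (θ α).ord.ToType → T)
    (hfan : IsLambdaFan {x : T | Set.Ici x ∈ U.carrier} lam θ t) :
    TukeyEquiv ((↥U.carrier)ᵒᵈ)
      ((setCof {x : T | Set.Ici x ∈ U.carrier}).ord.ToType ×
        WeakProd (fun α => 1 + θ α)) ∧
      ∃ (μ : Cardinal.{u}) (I : Type u) (κ : I → Cardinal.{u}),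
        (μ = 1 ∨ (ℵ₀ ≤ μ ∧ μ.IsRegular)) ∧
        (∀ i, κ i = 2 ∨ (ℵ₀ ≤ κ i ∧ (κ i).IsRegular)) ∧
        TukeyEquiv ((↥U.carrier)ᵒᵈ) (μ.ord.ToType × WeakProd κ) := by
  classical
  let _ : LinearOrder U.chain := (U.isChain_chain hpt).linearOrder
  have : Nonempty U.chain := ⟨⟨⊥, U.bot_mem_chain⟩⟩
  obtain ⟨c, hc, hcof⟩ := Order.exists_strictMono_isCofinal_range U.chain
  have hU : TukeyEquiv (↥U.carrier)ᵒᵈ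
      ((setCof U.chain).ord.ToType × WeakProd fun α => 1 + θ α) := by
    rw [setCof_eq_cof]
    refine hfan.tukeyEquiv U hpt ((Subtype.strictMono_coe _).comp hc) (fun d => (c d).2)
      fun x hx => ?_
    obtain ⟨_, ⟨d, rfl⟩, hd⟩ := hcof ⟨x, hx⟩
    exact ⟨d, hd⟩
  refine ⟨hU, setCof U.chain, lam.ord.ToType, fun α => 1 + θ α, ?_,
    fun α => Cardinal.one_add_eq_two_or_isRegular (hfan.theta α), hU⟩
  rw [setCof_eq_cof]
  exact Order.cof_eq_one_or_isRegular U.chain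
end

section
/- Let κ be an infinite cardinal and let T be a pseudo-tree with a least element with |T| = κ. If there exist an initial chain C ⊆ T and a κ-fan {s^α_β : α < κ, β < θ_α} above C such that the set {α < κ : θ_α = 1} has cardinality κ, then Treealg T has an ultrafilter U with (U,⊇) ≡_T ([κ]^{<ω},⊆). -/
open Cardinal

universe u

/-!
The ultrafilter is any ultrafilter on `T` containing the sets `Ici c \ (Ici t₁ ∪ ⋯ ∪ Ici tₙ)`
with `c ∈ C` and `tᵢ` in the fan: it sits just above `C` without entering any branch of the
fan, and such sets never run out because the fan has infinitely many branches. A member `u`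
of the tree algebra is determined by finitely many cones, so it can be disjoint from members
of only finitely many branches; sending `u` to the finite set of these branches is a cofinal
map witnessing `[κ]^{<ω} ≤_T U`. Conversely `|U| ≤ |Treealg T| = κ`, and every directed set of
size at most `κ` is Tukey below `[κ]^{<ω}`.
-/

open Set Filter

section GenBoolAlg

variable {X : Type*} {G : Set (Set X)}

theorem subset_genBoolAlg : G ⊆ genBoolAlg G :=
  fun _ hg => mem_sInter.2 fun _ hB => hB.1 hg

theorem compl_mem_genBoolAlg {u : Set X} (hu : u ∈ genBoolAlg G) : uᶜ ∈ genBoolAlg G :=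
  mem_sInter.2 fun B hB => hB.2.2.1 u (mem_sInter.1 hu B hB)

theorem inter_mem_genBoolAlg {u v : Set X} (hu : u ∈ genBoolAlg G) (hv : v ∈ genBoolAlg G) :
    u ∩ v ∈ genBoolAlg G :=
  mem_sInter.2 fun B hB => hB.2.2.2 u (mem_sInter.1 hu B hB) v (mem_sInter.1 hv B hB)

theorem genBoolAlg_subset {B : Set (Set X)} (hGB : G ⊆ B) (h0 : ∅ ∈ B)
    (hc : ∀ s ∈ B, sᶜ ∈ B) (hi : ∀ s ∈ B, ∀ t ∈ B, s ∩ t ∈ B) : genBoolAlg G ⊆ B :=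
  fun _ hu => mem_sInter.1 hu B ⟨hGB, h0, hc, hi⟩

theorem diff_biUnion_mem_genBoolAlg {ι : Type*} {s : Set X} {f : ι → Set X} (K : Finset ι)
    (hs : s ∈ genBoolAlg G) (hf : ∀ i, f i ∈ genBoolAlg G) :
    s \ ⋃ i ∈ K, f i ∈ genBoolAlg G := by
  classical
  induction K using Finset.induction_on with
  | empty => simpa using hs
  | insert i K _ ih =>
    rw [Finset.set_biUnion_insert, union_comm, ← sdiff_sdiff, sdiff_eq]
    exact inter_mem_genBoolAlg ih (compl_mem_genBoolAlg (hf i))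

theorem exists_finite_forall_mem_iff_of_mem_genBoolAlg {u : Set X} (hu : u ∈ genBoolAlg G) :
    ∃ G₀ ⊆ G, G₀.Finite ∧ ∀ x y, (∀ g ∈ G₀, x ∈ g ↔ y ∈ g) → (x ∈ u ↔ y ∈ u) := by
  refine genBoolAlg_subset (B := {u | ∃ G₀ ⊆ G, G₀.Finite ∧
    ∀ x y, (∀ g ∈ G₀, x ∈ g ↔ y ∈ g) → (x ∈ u ↔ y ∈ u)}) ?_ ?_ ?_ ?_ hu
  · exact fun g hg => ⟨{g}, singleton_subset_iff.2 hg, finite_singleton g,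
      fun x y h => h g rfl⟩
  · exact ⟨∅, empty_subset _, finite_empty, fun _ _ _ => Iff.rfl⟩
  · rintro s ⟨G₀, hG₀, hfin, hs⟩
    exact ⟨G₀, hG₀, hfin, fun x y h => not_congr (hs x y h)⟩
  · rintro s ⟨G₀, hG₀, hf₀, hs⟩ t ⟨G₁, hG₁, hf₁, ht⟩
    exact ⟨G₀ ∪ G₁, union_subset hG₀ hG₁, hf₀.union hf₁, fun x y h =>
      and_congr (hs x y fun g hg => h g (.inl hg)) (ht x y fun g hg => h g (.inr hg))⟩

def Ultrafilter.toSetUltrafilter (𝒰 : Ultrafilter X) (G : Set (Set X)) :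
    SetUltrafilter (genBoolAlg G) where
  carrier := {b | b ∈ genBoolAlg G ∧ b ∈ 𝒰}
  subset_alg _ hb := hb.1
  empty_not_mem h := 𝒰.empty_notMem h.2
  inter_mem _ ha _ hb := ⟨inter_mem_genBoolAlg ha.1 hb.1, inter_mem ha.2 hb.2⟩
  up_closed _ ha _ hb hab := ⟨hb, mem_of_superset ha.2 hab⟩
  mem_or_compl_mem b hb :=
    (𝒰.mem_or_compl_mem b).imp (fun h => ⟨hb, h⟩) (fun h => ⟨compl_mem_genBoolAlg hb, h⟩)

end GenBoolAlg

instance SetUltrafilter.isDirectedOrder_orderDual {X : Type*} {B : Set (Set X)}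
    (U : SetUltrafilter B) :
    IsDirectedOrder (↥U.carrier)ᵒᵈ :=
  ⟨fun a b => ⟨OrderDual.toDual ⟨_, U.inter_mem _ a.ofDual.2 _ b.ofDual.2⟩,
    inter_subset_left, inter_subset_right⟩⟩

section Tukey

universe v w

theorem tukeyLE_of_forall_exists_forall_le {P Q : Type*} [Preorder P] [Preorder Q]
    (f : P → Q) (hf : ∀ q, ∃ p, ∀ p', p ≤ p' → q ≤ f p') : TukeyLE Q P := by
  refine ⟨f, fun X hX q => ?_⟩
  obtain ⟨p, hp⟩ := hf q
  obtain ⟨x, hxX, hpx⟩ := hX p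
  exact ⟨f x, mem_image_of_mem f hxX, hp x hpx⟩

theorem tukeyLE_finset_of_mk_le {P : Type v} {A : Type w} [Preorder P] [IsDirectedOrder P]
    [Nonempty P] (h : Cardinal.lift.{w} #P ≤ Cardinal.lift.{v} #A) : TukeyLE P (Finset A) := by
  classical
  obtain ⟨g, hg⟩ : ∃ g : A → P, Function.Surjective g := by
    obtain ⟨i⟩ := Cardinal.lift_mk_le'.1 h
    exact ⟨Function.invFun i, Function.invFun_surjective i.injective⟩
  choose ub hub using fun F : Finset A => (F.image g).exists_le
  refine tukeyLE_of_forall_exists_forall_le ub fun p => ?_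
  obtain ⟨a, rfl⟩ := hg p
  exact ⟨{a}, fun F hF => hub F _ (Finset.mem_image_of_mem g (hF (Finset.mem_singleton_self a)))⟩

end Tukey

section TreeAlgebra

variable {T : Type*} [PartialOrder T]

theorem Ici_mem_treealg_s19 (t : T) : Ici t ∈ treealg T := subset_genBoolAlg ⟨t, rfl⟩

theorem exists_finset_forall_le_iff_of_mem_treealg {u : Set T} (hu : u ∈ treealg T) :
    ∃ F : Finset T, ∀ x y, (∀ t ∈ F, t ≤ x ↔ t ≤ y) → (x ∈ u ↔ y ∈ u) := by
  obtain ⟨G₀, hG₀, hfin, hdet⟩ := exists_finite_forall_mem_iff_of_mem_genBoolAlg hu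
  refine ⟨(hfin.preimage Ici_injective.injOn).toFinset, fun x y h => hdet x y ?_⟩
  intro g hg
  obtain ⟨t, rfl⟩ := hG₀ hg
  exact h t (by simpa using hg)

theorem mk_treealg_le [Infinite T] : #(treealg T) ≤ #T := by
  classical
  choose F hF using fun u : treealg T => exists_finset_forall_le_iff_of_mem_treealg u.2
  -- `u` is the union of the `F u`-cells it meets, and these cells are indexed by subsets of `F u`.
  let code (u : treealg T) : Finset T × Finset (Finset T) :=
    (F u, (F u).powerset.filter fun S => ∃ y ∈ (u : Set T), (F u).filter (· ≤ y) = S)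
  have hmem (u : treealg T) (x : T) :
      x ∈ (u : Set T) ↔ (F u).filter (· ≤ x) ∈ (code u).2 := by
    simp only [code, Finset.mem_filter, Finset.mem_powerset, Finset.filter_subset, true_and]
    refine ⟨fun hx => ⟨x, hx, rfl⟩, fun ⟨y, hy, hxy⟩ => (hF u x y fun t ht => ?_).2 hy⟩
    simpa [ht] using (Finset.ext_iff.1 hxy t).symm
  have hinj : Function.Injective code := by
    intro u v huv
    have hFuv : F u = F v := congrArg Prod.fst huv
    ext x
    rw [hmem u, hmem v, congrArg Prod.snd huv, hFuv]
  calc #(treealg T) ≤ #(Finset T × Finset (Finset T)) := Cardinal.mk_le_of_injective hinj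
    _ = #T := by
      simp only [Cardinal.mk_prod, Cardinal.lift_id, Cardinal.mk_finset_of_infinite]
      exact Cardinal.mul_eq_self (Cardinal.infinite_iff.1 ‹_›)

end TreeAlgebra

theorem le_iff_le_of_le_of_not_lt {T : Type*} [PartialOrder T]
    (hpt : ∀ x : T, IsChain (· ≤ ·) {s : T | s ≤ x}) {c g y : T} (hcy : c ≤ y)
    (hcg : ¬c < g) : g ≤ y ↔ g ≤ c := by
  refine ⟨fun hgy => ?_, fun hgc => hgc.trans hcy⟩
  rcases (hpt y).total hgy hcy with hgc | hcg'
  · exact hgc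
  · exact (hcg'.eq_of_not_lt hcg).ge

/-- If `c ∈ C` is not below `g`, neither is any larger element of `C`. -/
theorem IsChain.exists_mem_forall_not_lt {T : Type*} [PartialOrder T] {C : Set T}
    (hCchain : IsChain (· ≤ ·) C) (hCne : C.Nonempty) (F : Finset T) :
    ∃ c ∈ C, ∀ g ∈ F, (¬∀ c ∈ C, c < g) → ¬c < g := by
  classical
  induction F using Finset.induction_on with
  | empty =>
    obtain ⟨c, hc⟩ := hCne
    exact ⟨c, hc, by simp⟩
  | insert g F _ ih =>
    obtain ⟨c, hcC, hc⟩ := ih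
    by_cases hg : ∀ c ∈ C, c < g
    · exact ⟨c, hcC, Finset.forall_mem_insert _ _ _ |>.2 ⟨fun h => absurd hg h, hc⟩⟩
    obtain ⟨d, hdC, hdg⟩ := not_forall₂.1 hg
    obtain ⟨e, heC, hce, hde⟩ := hCchain.directedOn c hcC d hdC
    refine ⟨e, heC, Finset.forall_mem_insert _ _ _ |>.2 ⟨fun _ h => hdg (hde.trans_lt h), ?_⟩⟩
    exact fun g' hg' hg'C h => hc g' hg' hg'C (hce.trans_lt h)

/-- A fan above `C` with its branches `br i` but without the order along each branch. -/
structure IsFanFamily {T ι A : Type*} [PartialOrder T] (C : Set T) (br : ι → A) (t : ι → T) :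
    Prop where
  above : ∀ i, ∀ c ∈ C, c < t i
  approx : ∀ x, (∀ c ∈ C, c < x) → ∃ i, t i ≤ x
  incomp : ∀ i j, br i ≠ br j → ¬t i ≤ t j

section Fan

variable {T ι A : Type*} [PartialOrder T] {C : Set T} {br : ι → A} {t : ι → T}

def fanNbhd (t : ι → T) (c : T) (K : Finset ι) : Set T := Ici c \ ⋃ i ∈ K, Ici (t i)

def fanFilter (C : Set T) (t : ι → T) : Filter T :=
  ⨅ p : C × Finset ι, 𝓟 (fanNbhd t p.1 p.2)

theorem fanNbhd_mem_treealg (c : T) (K : Finset ι) : fanNbhd t c K ∈ treealg T :=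
  diff_biUnion_mem_genBoolAlg K (Ici_mem_treealg_s19 c) fun i => Ici_mem_treealg_s19 (t i)

theorem fanNbhd_mem_fanFilter {c : T} (hc : c ∈ C) (K : Finset ι) :
    fanNbhd t c K ∈ fanFilter C t :=
  mem_iInf_of_mem (⟨c, hc⟩, K) (mem_principal_self _)

theorem fanNbhd_anti {c c' : T} {K K' : Finset ι} (hc : c ≤ c') (hK : K ⊆ K') :
    fanNbhd t c' K' ⊆ fanNbhd t c K :=
  sdiff_subset_sdiff (Ici_subset_Ici.2 hc) (biUnion_subset_biUnion_left (by exact_mod_cast hK))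

/-- A branch not met by `K` has its members in every `fanNbhd t c K`. -/
theorem fanNbhd_nonempty [Infinite A] (hfan : IsFanFamily C br t) (hbr : Function.Surjective br)
    {c : T} (hc : c ∈ C) (K : Finset ι) : (fanNbhd t c K).Nonempty := by
  classical
  obtain ⟨a, -, haK⟩ := infinite_univ.exists_notMem_finset (K.image br)
  obtain ⟨i, rfl⟩ := hbr a
  refine ⟨t i, (hfan.above i c hc).le, ?_⟩
  simp only [mem_iUnion, mem_Ici, not_exists]
  exact fun j hj => hfan.incomp j i fun h => haK (h ▸ Finset.mem_image_of_mem br hj)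

theorem fanFilter_neBot [Infinite A] (hCne : C.Nonempty) (hCchain : IsChain (· ≤ ·) C)
    (hfan : IsFanFamily C br t) (hbr : Function.Surjective br) : (fanFilter C t).NeBot := by
  classical
  have : Nonempty C := hCne.to_subtype
  refine iInf_neBot_of_directed' ?_ fun p => principal_neBot_iff.2 <|
    fanNbhd_nonempty hfan hbr p.1.2 p.2
  rintro ⟨c, K⟩ ⟨c', K'⟩
  obtain ⟨d, hdC, hcd, hc'd⟩ := hCchain.directedOn c c.2 c' c'.2
  exact ⟨(⟨d, hdC⟩, K ∪ K'),
    principal_mono.2 (fanNbhd_anti hcd Finset.subset_union_left),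
    principal_mono.2 (fanNbhd_anti hc'd Finset.subset_union_right)⟩

/-- For a branch approximating none of the finitely many cones that determine `u`, the
points of `u ∩ fanNbhd t c K` and the members of the branch lie in the same cones. -/
theorem finite_image_disjoint_Ici
    (hpt : ∀ x : T, IsChain (· ≤ ·) {s : T | s ≤ x}) (hCne : C.Nonempty)
    (hCchain : IsChain (· ≤ ·) C) (hfan : IsFanFamily C br t) {u : Set T}
    (hu : u ∈ treealg T) (hmeet : ∀ c ∈ C, ∀ K, (u ∩ fanNbhd t c K).Nonempty) :
    (br '' {i | Disjoint u (Ici (t i))}).Finite := by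
  classical
  obtain ⟨F, hF⟩ := exists_finset_forall_le_iff_of_mem_treealg hu
  obtain ⟨K, hK⟩ : ∃ K : Finset ι, ∀ g ∈ F, (∀ c ∈ C, c < g) → ∃ i ∈ K, t i ≤ g := by
    choose j hj using fun g : F.filter (fun g => ∀ c ∈ C, c < g) =>
      hfan.approx g (Finset.mem_filter.1 g.2).2
    exact ⟨Finset.univ.image j, fun g hg hgC =>
      ⟨_, Finset.mem_image_of_mem j (Finset.mem_univ ⟨g, Finset.mem_filter.2 ⟨hg, hgC⟩⟩), hj _⟩⟩
  obtain ⟨c, hcC, hc⟩ := hCchain.exists_mem_forall_not_lt hCne F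
  refine (K.image br).finite_toSet.subset ?_
  rintro _ ⟨i, hi, rfl⟩
  by_contra hiK
  obtain ⟨x, hxu, hxc, hxK⟩ := hmeet c hcC K
  have hsame : ∀ g ∈ F, g ≤ x ↔ g ≤ t i := by
    intro g hg
    by_cases hgC : ∀ c ∈ C, c < g
    · obtain ⟨j, hjK, hjg⟩ := hK g hg hgC
      refine iff_of_false (fun hgx => hxK (mem_biUnion hjK (hjg.trans hgx))) fun hgi => ?_
      exact hfan.incomp j i (fun h => hiK (h ▸ Finset.mem_coe.2 (Finset.mem_image_of_mem br hjK)))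
        (hjg.trans hgi)
    · rw [le_iff_le_of_le_of_not_lt hpt hxc (hc g hg hgC),
        le_iff_le_of_le_of_not_lt hpt (hfan.above i c hcC).le (hc g hg hgC)]
  exact disjoint_left.1 hi ((hF x (t i) hsame).1 hxu) le_rfl

end Fan

theorem finset_tukeyLE_toSetUltrafilter {T ι A : Type*} [PartialOrder T] {C : Set T}
    {br : ι → A} {t : ι → T} (hpt : ∀ x : T, IsChain (· ≤ ·) {s : T | s ≤ x})
    (hCne : C.Nonempty) (hCchain : IsChain (· ≤ ·) C) (hfan : IsFanFamily C br t)
    (hbr : Function.Surjective br) (𝒰 : Ultrafilter T) (h𝒰 : ↑𝒰 ≤ fanFilter C t) :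
    TukeyLE (Finset A) (↥(𝒰.toSetUltrafilter {s | ∃ t, s = Ici t}).carrier)ᵒᵈ := by
  classical
  have hfin (u : (↥(𝒰.toSetUltrafilter {s | ∃ t, s = Ici t}).carrier)ᵒᵈ) :
      (br '' {i | Disjoint (u.ofDual : Set T) (Ici (t i))}).Finite :=
    finite_image_disjoint_Ici hpt hCne hCchain hfan u.ofDual.2.1 fun c hc K =>
      𝒰.nonempty_of_mem (inter_mem u.ofDual.2.2 (h𝒰 (fanNbhd_mem_fanFilter hc K)))
  refine tukeyLE_of_forall_exists_forall_le (fun u => (hfin u).toFinset) fun F => ?_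
  obtain ⟨c, hc⟩ := hCne
  let K := F.image (Function.surjInv hbr)
  refine ⟨OrderDual.toDual ⟨fanNbhd t c K, fanNbhd_mem_treealg c K,
    h𝒰 (fanNbhd_mem_fanFilter hc K)⟩, fun u hu a ha => ?_⟩
  rw [Finite.mem_toFinset]
  refine ⟨Function.surjInv hbr a, disjoint_left.2 fun x hxu hxa => ?_, Function.surjInv_eq hbr a⟩
  exact (hu hxu).2 (mem_biUnion (Finset.mem_image_of_mem _ ha) hxa)

theorem IsLambdaFan.isFanFamily {T : Type*} [PartialOrder T] {C : Set T} {lam : Cardinal}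
    {θ : lam.ord.ToType → Cardinal} {t : (α : lam.ord.ToType) → (θ α).ord.ToType → T}
    (h : IsLambdaFan C lam θ t) :
    IsFanFamily C Sigma.fst fun p : (α : lam.ord.ToType) × (θ α).ord.ToType => t p.1 p.2 where
  above p := h.above p.1 p.2
  approx x hx := let ⟨α, β, hαβ⟩ := h.approx x hx; ⟨⟨α, β⟩, hαβ⟩
  incomp p q hpq := (h.incomp p.1 q.1 hpq p.2 q.2).1

theorem IsLambdaFan.surjective_fst {T : Type*} [PartialOrder T] {C : Set T} {lam : Cardinal}
    {θ : lam.ord.ToType → Cardinal} {t : (α : lam.ord.ToType) → (θ α).ord.ToType → T}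
    (h : IsLambdaFan C lam θ t) :
    Function.Surjective (Sigma.fst : (α : lam.ord.ToType) × (θ α).ord.ToType → _) := by
  intro α
  have hθ : θ α ≠ 0 := by
    rcases h.theta α with h1 | ⟨h1, -⟩
    · simp [h1]
    · exact (aleph0_pos.trans_le h1).ne'
  exact ⟨⟨α, (Ordinal.nonempty_toType_iff.2 (ord_eq_zero.not.2 hθ)).some⟩, rfl⟩

theorem stmt19_general (κ : Cardinal.{u}) (hκ : ℵ₀ ≤ κ) {T : Type u} [PartialOrder T]
    (hpt : ∀ x : T, IsChain (· ≤ ·) {s : T | s ≤ x}) (hT : #T = κ)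
    (C : Set T) (hCne : C.Nonempty) (hCchain : IsChain (· ≤ ·) C)
    (θ : κ.ord.ToType → Cardinal.{u})
    (s : (α : κ.ord.ToType) → (θ α).ord.ToType → T)
    (hfan : IsLambdaFan C κ θ s) :
    ∃ U : SetUltrafilter (treealg T),
      TukeyEquiv ((↥U.carrier)ᵒᵈ) (Finset κ.ord.ToType) := by
  have : Infinite κ.ord.ToType := Cardinal.infinite_iff.2 (by rwa [mk_ord_toType])
  have : Infinite T := Cardinal.infinite_iff.2 (hT ▸ hκ)
  have := fanFilter_neBot hCne hCchain hfan.isFanFamily hfan.surjective_fst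
  let 𝒰 := Ultrafilter.of (fanFilter C fun p : (α : κ.ord.ToType) × (θ α).ord.ToType => s p.1 p.2)
  let U := 𝒰.toSetUltrafilter {s | ∃ t, s = Ici t}
  obtain ⟨c, hc⟩ := hCne
  have : Nonempty (↥U.carrier)ᵒᵈ := ⟨OrderDual.toDual ⟨Ici c, Ici_mem_treealg_s19 c,
    Ultrafilter.of_le _ (mem_of_superset (fanNbhd_mem_fanFilter hc ∅) sdiff_subset)⟩⟩
  refine ⟨U, tukeyLE_finset_of_mk_le ?_, finset_tukeyLE_toSetUltrafilter hpt ⟨c, hc⟩ hCchain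
    hfan.isFanFamily hfan.surjective_fst 𝒰 (Ultrafilter.of_le _)⟩
  calc lift.{u} #(↥U.carrier)ᵒᵈ = #U.carrier := lift_id _
    _ ≤ #(treealg T) := mk_le_mk_of_subset U.subset_alg
    _ ≤ #T := mk_treealg_le
    _ = lift.{u} #κ.ord.ToType := by simp [hT]

/-- Let `κ` be infinite and `T` a pseudo-tree with a least element with
`|T| = κ`.  If some initial chain `C ⊆ T` carries a `κ`-fan `(s α β)` above it in which
`κ`-many of the cardinals `θ α` equal `1`, then `Treealg T` has an ultrafilter of
maximal type `([κ]^{<ω},⊆)`. -/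
theorem stmt19 (κ : Cardinal.{u}) (hκ : ℵ₀ ≤ κ) {T : Type u} [PartialOrder T] [OrderBot T]
    (hpt : ∀ x : T, IsChain (· ≤ ·) {s : T | s ≤ x}) (hT : #T = κ)
    (C : Set T) (hCne : C.Nonempty) (hCchain : IsChain (· ≤ ·) C) (hClower : IsLowerSet C)
    (θ : κ.ord.ToType → Cardinal.{u})
    (s : (α : κ.ord.ToType) → (θ α).ord.ToType → T)
    (hfan : IsLambdaFan C κ θ s)
    (hones : #↥{α : κ.ord.ToType | θ α = 1} = κ) :
    ∃ U : SetUltrafilter (treealg T),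
      TukeyEquiv ((↥U.carrier)ᵒᵈ) (Finset κ.ord.ToType) :=
  stmt19_general κ hκ hpt hT C hCne hCchain θ s hfan
end
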